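/- In the triangular grid with a periodic configuration c (periodic of even period n in both coordinate directions): if the cell u is stable for c under rule 2 but not stable under rule 23, then the connected component G[0,u] of inactive cells containing u is a tree, i.e. it is connected and contains no cycle. -/

import Mathlib

/-- Neighbors in the triangular grid: cell `(i,j)` is adjacent to `(i-1,j)`,
`(i+1,j)`, and `(i,j-1)` if `i+j` is even, `(i,j+1)` if `i+j` is odd. -/
def triNbrs (p : ℤ × ℤ) : Finset (ℤ × ℤ) :=
  {(p.1 - 1, p.2), (p.1 + 1, p.2),
   (p.1, if Even (p.1 + p.2) then p.2 - 1 else p.2 + 1)}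

/-- Number of active neighbors of `p` in configuration `c`. -/
def triActCount (c : ℤ × ℤ → Bool) (p : ℤ × ℤ) : ℕ :=
  ((triNbrs p).filter (fun q => c q = true)).card

/-- The freezing totalistic rule on the triangular grid with activating set `I`. -/
def ruleT (I : Finset ℕ) (c : ℤ × ℤ → Bool) : ℤ × ℤ → Bool :=
  fun p => c p || decide (triActCount c p ∈ I)

/-- A cell `u` is stable for `c` under `F` if it is inactive and remains
inactive at all times. -/
def isStable (F : (ℤ × ℤ → Bool) → (ℤ × ℤ → Bool)) (c : ℤ × ℤ → Bool)
    (u : ℤ × ℤ) : Prop :=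
  c u = false ∧ ∀ t : ℕ, F^[t] c u = false

/-- A configuration is periodic of period `n` in both coordinate directions. -/
def Periodic (n : ℕ) (c : ℤ × ℤ → Bool) : Prop :=
  ∀ p : ℤ × ℤ, c (p.1 + n, p.2) = c p ∧ c (p.1, p.2 + n) = c p

/-- The graph `G[0]` on the inactive cells of `c`, with adjacency inherited
from the triangular grid. -/
def triG0 (c : ℤ × ℤ → Bool) : SimpleGraph (ℤ × ℤ) where
  Adj p q := p ≠ q ∧ c p = false ∧ c q = false ∧ (q ∈ triNbrs p ∨ p ∈ triNbrs q)
  symm := ⟨fun p q h => ⟨h.1.symm, h.2.2.1, h.2.1, h.2.2.2.symm⟩⟩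
  loopless := ⟨fun p h => h.1 rfl⟩

/-!
Suppose the component of `u` contains a cycle, and join `u` to it by a path. Every cell of the
path and the cycle other than `u` has two inactive neighbours on them, and `u` never activates
under rule 2, so no cell of the figure ever activates under rule 2; in particular `u` has a
neighbour that is stable under rule 2. Under rule 2 a stable cell with a stable neighbour has two
stable neighbours, so the stable cells having a stable neighbour, `u` among them, form a set in
which every cell has two neighbours. Such a set never activates under a rule that needs at least
two active neighbours, such as rule 23, so `u` would be stable under rule 23.
-/

namespace SimpleGraph

variable {V : Type*} {G : SimpleGraph V}

theorem Subgraph.exists_ne_adj_of_ncard_neighborSet_eq_two {H : G.Subgraph} {x : V}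
    (h : (H.neighborSet x).ncard = 2) : ∃ y₁ y₂, y₁ ≠ y₂ ∧ H.Adj x y₁ ∧ H.Adj x y₂ := by
  obtain ⟨y₁, y₂, hne, hN⟩ := Set.ncard_eq_two.1 h
  exact ⟨y₁, y₂, hne, by simp [← mem_neighborSet, hN], by simp [← mem_neighborSet, hN]⟩

theorem Walk.IsCycle.exists_ne_toSubgraph_adj {w x : V} {p : G.Walk w w} (hp : p.IsCycle)
    (hx : x ∈ p.support) : ∃ y₁ y₂, y₁ ≠ y₂ ∧ p.toSubgraph.Adj x y₁ ∧ p.toSubgraph.Adj x y₂ :=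
  Subgraph.exists_ne_adj_of_ncard_neighborSet_eq_two (hp.ncard_neighborSet_toSubgraph_eq_two hx)

theorem Walk.IsPath.exists_ne_toSubgraph_adj {u w x : V} {p : G.Walk u w} (hp : p.IsPath)
    (hx : x ∈ p.support) (hxu : x ≠ u) (hxw : x ≠ w) :
    ∃ y₁ y₂, y₁ ≠ y₂ ∧ p.toSubgraph.Adj x y₁ ∧ p.toSubgraph.Adj x y₂ := by
  obtain ⟨i, rfl, hi⟩ := Walk.mem_support_iff_exists_getVert.1 hx
  have hi0 : i ≠ 0 := by rintro rfl; exact hxu p.getVert_zero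
  have hil : i < p.length := lt_of_le_of_ne hi fun h => hxw (h ▸ p.getVert_length)
  exact Subgraph.exists_ne_adj_of_ncard_neighborSet_eq_two
    (hp.ncard_neighborSet_toSubgraph_internal_eq_two hi0 hil)

theorem Walk.IsPath.exists_ne_sup_toSubgraph_adj {u w x : V} {p : G.Walk u w} {q : G.Walk w w}
    (hp : p.IsPath) (hq : q.IsCycle) (hx : x ∈ (p.toSubgraph ⊔ q.toSubgraph).verts)
    (hxu : x ≠ u) : ∃ y₁ y₂, y₁ ≠ y₂ ∧ (p.toSubgraph ⊔ q.toSubgraph).Adj x y₁ ∧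
      (p.toSubgraph ⊔ q.toSubgraph).Adj x y₂ := by
  simp only [Subgraph.verts_sup, Walk.verts_toSubgraph, Set.mem_union, Set.mem_ofPred_eq] at hx
  by_cases hxq : x ∈ q.support
  · obtain ⟨y₁, y₂, hne, h₁, h₂⟩ := hq.exists_ne_toSubgraph_adj hxq
    exact ⟨y₁, y₂, hne, Subgraph.sup_adj.2 (.inr h₁), Subgraph.sup_adj.2 (.inr h₂)⟩
  · have hxw : x ≠ w := fun h => hxq (h ▸ q.start_mem_support)
    obtain ⟨y₁, y₂, hne, h₁, h₂⟩ := hp.exists_ne_toSubgraph_adj (hx.resolve_right hxq) hxu hxw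
    exact ⟨y₁, y₂, hne, Subgraph.sup_adj.2 (.inl h₁), Subgraph.sup_adj.2 (.inl h₂)⟩

theorem Walk.IsCycle.exists_sup_toSubgraph_adj {u w : V} (p : G.Walk u w) {q : G.Walk w w}
    (hq : q.IsCycle) : ∃ y, (p.toSubgraph ⊔ q.toSubgraph).Adj u y := by
  by_cases hp : p.Nil
  · obtain ⟨y, -, -, h, -⟩ := hq.exists_ne_toSubgraph_adj q.start_mem_support
    exact ⟨y, Subgraph.sup_adj.2 (.inr (hp.eq ▸ h))⟩
  · exact ⟨p.snd, Subgraph.sup_adj.2 (.inl (p.toSubgraph_adj_snd hp))⟩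

end SimpleGraph

theorem triNbrs_symm {p q : ℤ × ℤ} (h : q ∈ triNbrs p) : p ∈ triNbrs q := by
  obtain ⟨i, j⟩ := p; obtain ⟨a, b⟩ := q
  simp only [triNbrs, Finset.mem_insert, Finset.mem_singleton, Prod.mk.injEq,
    Int.even_iff] at h ⊢
  rcases h with ⟨rfl, rfl⟩ | ⟨rfl, rfl⟩ | ⟨rfl, rfl⟩ <;> split_ifs <;> omega

theorem card_triNbrs (p : ℤ × ℤ) : (triNbrs p).card = 3 := by
  rw [triNbrs, Finset.card_insert_of_notMem, Finset.card_insert_of_notMem, Finset.card_singleton]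
  · simp
  · simp only [Finset.mem_insert, Finset.mem_singleton, Prod.mk.injEq, not_or, not_and]
    constructor <;> intro h <;> omega

theorem triG0_adj_mem_triNbrs {c : ℤ × ℤ → Bool} {p q : ℤ × ℤ} (h : (triG0 c).Adj p q) :
    q ∈ triNbrs p :=
  h.2.2.2.elim id triNbrs_symm

theorem triActCount_add_card_inactive (c : ℤ × ℤ → Bool) (p : ℤ × ℤ) :
    triActCount c p + ((triNbrs p).filter (fun q => c q = false)).card = 3 := by
  simpa [triActCount, card_triNbrs] using
    Finset.card_filter_add_card_filter_not (s := triNbrs p) (p := fun q => c q = true)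

section

variable {I : Finset ℕ} {c : ℤ × ℤ → Bool}

theorem ruleT_eq_false (hI : ∀ m ∈ I, 2 ≤ m) {p q₁ q₂ : ℤ × ℤ} (hp : c p = false)
    (hq₁ : q₁ ∈ triNbrs p) (hq₂ : q₂ ∈ triNbrs p) (hne : q₁ ≠ q₂) (hc₁ : c q₁ = false)
    (hc₂ : c q₂ = false) : ruleT I c p = false := by
  have hinactive : 1 < ((triNbrs p).filter (fun q => c q = false)).card :=
    Finset.one_lt_card.2 ⟨q₁, by simp [hq₁, hc₁], q₂, by simp [hq₂, hc₂], hne⟩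
  have := triActCount_add_card_inactive c p
  simp only [ruleT, hp, Bool.false_or, decide_eq_false_iff_not]
  exact fun hm => by have := hI _ hm; omega

theorem isStable_iff {F : (ℤ × ℤ → Bool) → ℤ × ℤ → Bool} {u : ℤ × ℤ} :
    isStable F c u ↔ ∀ t, F^[t] c u = false :=
  ⟨fun h => h.2, fun h => ⟨h 0, h⟩⟩

theorem ruleT_iterate_eq_true_of_le {p : ℤ × ℤ} {t t' : ℕ} (htt' : t ≤ t')
    (h : (ruleT I)^[t] c p = true) : (ruleT I)^[t'] c p = true := by
  induction htt' with
  | refl => exact h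
  | step _ ih => simp [Function.iterate_succ_apply', ruleT, ih]

theorem exists_ruleT_iterate_forall_eq_true (s : Finset (ℤ × ℤ))
    (h : ∀ p ∈ s, ∃ t, (ruleT I)^[t] c p = true) :
    ∃ T, ∀ p ∈ s, (ruleT I)^[T] c p = true := by
  classical
  induction s using Finset.induction_on with
  | empty => exact ⟨0, by simp⟩
  | insert p s _ ih =>
    obtain ⟨t, ht⟩ := h p (Finset.mem_insert_self p s)
    obtain ⟨T, hT⟩ := ih fun q hq => h q (Finset.mem_insert_of_mem hq)
    refine ⟨max t T, fun q hq => ?_⟩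
    rcases Finset.mem_insert.1 hq with rfl | hq
    · exact ruleT_iterate_eq_true_of_le (le_max_left _ _) ht
    · exact ruleT_iterate_eq_true_of_le (le_max_right _ _) (hT q hq)

theorem isStable_of_forall_mem (hI : ∀ m ∈ I, 2 ≤ m) {S : Set (ℤ × ℤ)}
    (hS : ∀ x ∈ S, isStable (ruleT I) c x ∨
      c x = false ∧ ∃ y₁ ∈ S, ∃ y₂ ∈ S, y₁ ≠ y₂ ∧ y₁ ∈ triNbrs x ∧ y₂ ∈ triNbrs x) :
    ∀ x ∈ S, isStable (ruleT I) c x := by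
  suffices h : ∀ t, ∀ x ∈ S, (ruleT I)^[t] c x = false from
    fun x hx => isStable_iff.2 fun t => h t x hx
  intro t
  induction t with
  | zero => exact fun x hx => (hS x hx).elim (·.1) (·.1)
  | succ t ih =>
    intro x hx
    rcases hS x hx with hstable | ⟨-, y₁, hy₁, y₂, hy₂, hne, hn₁, hn₂⟩
    · exact hstable.2 (t + 1)
    · rw [Function.iterate_succ_apply']
      exact ruleT_eq_false hI (ih x hx) hn₁ hn₂ hne (ih y₁ hy₁) (ih y₂ hy₂)

/-- At a time `T` by which every eventually active neighbour of `p` is active, `p` sees at most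
two active neighbours (`q` is inactive) and never exactly two, hence at most one; its (at least
two) inactive neighbours at time `T` are therefore stable. -/
theorem exists_isStable_triNbrs_of_isStable {p q : ℤ × ℤ}
    (hp : isStable (ruleT {2}) c p) (hq : q ∈ triNbrs p) (hqs : isStable (ruleT {2}) c q) :
    ∃ y₁ y₂, y₁ ≠ y₂ ∧ y₁ ∈ triNbrs p ∧ y₂ ∈ triNbrs p ∧
      isStable (ruleT {2}) c y₁ ∧ isStable (ruleT {2}) c y₂ := by
  classical
  obtain ⟨T, hT⟩ := exists_ruleT_iterate_forall_eq_true (I := {2}) (c := c)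
    ((triNbrs p).filter fun y => ∃ t, (ruleT {2})^[t] c y = true)
    (fun y hy => (Finset.mem_filter.1 hy).2)
  set d := (ruleT {2})^[T] c
  have hne_two : triActCount d p ≠ 2 := by
    have := hp.2 (T + 1)
    rw [Function.iterate_succ_apply'] at this
    simp only [ruleT, Bool.or_eq_false_iff, decide_eq_false_iff_not, Finset.mem_singleton] at this
    exact this.2
  have hq_inactive : 0 < ((triNbrs p).filter fun y => d y = false).card :=
    Finset.card_pos.2 ⟨q, by simp [hq, d, hqs.2 T]⟩
  have hinactive : 1 < ((triNbrs p).filter fun y => d y = false).card := by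
    have := triActCount_add_card_inactive d p
    omega
  have hstable : ∀ y ∈ (triNbrs p).filter (fun y => d y = false), isStable (ruleT {2}) c y := by
    intro y hy
    rw [Finset.mem_filter] at hy
    refine isStable_iff.2 fun t => Bool.not_eq_true _ ▸ fun ht => ?_
    simpa [hy.2] using hT y (Finset.mem_filter.2 ⟨hy.1, t, ht⟩)
  obtain ⟨y₁, hy₁, y₂, hy₂, hne⟩ := Finset.one_lt_card.1 hinactive
  exact ⟨y₁, y₂, hne, (Finset.mem_filter.1 hy₁).1, (Finset.mem_filter.1 hy₂).1,
    hstable y₁ hy₁, hstable y₂ hy₂⟩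

theorem isStable_two_three_of_isStable_two {u y : ℤ × ℤ}
    (hu : isStable (ruleT {2}) c u) (hy : y ∈ triNbrs u) (hys : isStable (ruleT {2}) c y) :
    isStable (ruleT {2, 3}) c u := by
  let S := {p | isStable (ruleT {2}) c p ∧ ∃ q ∈ triNbrs p, isStable (ruleT {2}) c q}
  refine isStable_of_forall_mem (S := S) (by decide) (fun p ⟨hp, q, hq, hqs⟩ => .inr ?_) u
    ⟨hu, y, hy, hys⟩
  obtain ⟨y₁, y₂, hne, h₁, h₂, hs₁, hs₂⟩ := exists_isStable_triNbrs_of_isStable hp hq hqs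
  exact ⟨hp.1, y₁, ⟨hs₁, p, triNbrs_symm h₁, hp⟩, y₂, ⟨hs₂, p, triNbrs_symm h₂, hp⟩, hne, h₁, h₂⟩

theorem exists_isStable_triNbrs_of_isCycle {u w : ℤ × ℤ}
    (hu : isStable (ruleT {2}) c u) (hw : (triG0 c).Reachable u w) {cy : (triG0 c).Walk w w}
    (hcy : cy.IsCycle) : ∃ y ∈ triNbrs u, isStable (ruleT {2}) c y := by
  obtain ⟨P, hP⟩ := hw.exists_isPath
  set H := P.toSubgraph ⊔ cy.toSubgraph
  have hH : ∀ x ∈ H.verts, isStable (ruleT {2}) c x := by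
    refine isStable_of_forall_mem (by decide) fun x hx => ?_
    by_cases hxu : x = u
    · exact .inl (hxu ▸ hu)
    obtain ⟨y₁, y₂, hne, h₁, h₂⟩ := hP.exists_ne_sup_toSubgraph_adj hcy hx hxu
    exact .inr ⟨(H.adj_sub h₁).2.1, y₁, h₁.snd_mem, y₂, h₂.snd_mem, hne,
      triG0_adj_mem_triNbrs (H.adj_sub h₁), triG0_adj_mem_triNbrs (H.adj_sub h₂)⟩
  obtain ⟨y, hy⟩ := hcy.exists_sup_toSubgraph_adj P
  exact ⟨y, triG0_adj_mem_triNbrs (H.adj_sub hy), hH y hy.snd_mem⟩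

end

theorem stmt6_general (c : ℤ × ℤ → Bool) (u : ℤ × ℤ)
    (hstab2 : isStable (ruleT {2}) c u)
    (hnstab23 : ¬ isStable (ruleT {2, 3}) c u) :
    (∀ w w', (triG0 c).Reachable u w → (triG0 c).Reachable u w' →
      (triG0 c).Reachable w w') ∧
    (∀ w, (triG0 c).Reachable u w → ∀ p : (triG0 c).Walk w w, ¬ p.IsCycle) := by
  refine ⟨fun w w' hw hw' => hw.symm.trans hw', fun w hw cy hcy => hnstab23 ?_⟩
  obtain ⟨y, hy, hys⟩ := exists_isStable_triNbrs_of_isCycle hstab2 hw hcy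
  exact isStable_two_three_of_isStable_two hstab2 hy hys

/-- triangular grid, `c` periodic of even period `n`. If `u` is
stable under rule 2 but not under rule 23, then the connected component
`G[0,u]` of inactive cells containing `u` is a tree: it is connected and
contains no cycle. -/
theorem stmt6 (n : ℕ) (hn : 0 < n) (hne : Even n) (c : ℤ × ℤ → Bool)
    (hper : Periodic n c) (u : ℤ × ℤ)
    (hstab2 : isStable (ruleT {2}) c u)
    (hnstab23 : ¬ isStable (ruleT {2, 3}) c u) :
    (∀ w w', (triG0 c).Reachable u w → (triG0 c).Reachable u w' →
      (triG0 c).Reachable w w') ∧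
    (∀ w, (triG0 c).Reachable u w → ∀ p : (triG0 c).Walk w w, ¬ p.IsCycle) :=
  stmt6_general c u hstab2 hnstab23
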